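/- In the fixed-design kernel regression setting, define early-stopping (gradient descent) iterates by ᾰ₀ = 0 and ᾰ_t = ᾰ_{t−1} − (γ/n)(K_n ᾰ_{t−1} − y), with prediction vectors v̆_t = K_n ᾰ_t. If 0 < γ < 1/‖K_n‖_op and t ≥ 2, then E[R(v̆_t)] ≤ c_t · E[R(v̄_{1/(γt)})], where v̄_λ = K_n(K_n + λn I_n)⁻¹ y is the KRLS prediction with λ = 1/(γt), and c_t = 4(1 + 1/(t−1))² ≤ 16. -/

import Mathlib

/-!
Both predictors are spectral filters of `K_n` applied to `y`: in an orthonormal eigenbasis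
of `K_n` with eigenvalues `λᵢ`, gradient descent multiplies the `i`-th coordinate by
`φᵢ = 1 - (1 - γλᵢ/n)ᵗ` and kernel ridge regression by `ψᵢ = λᵢ / (λᵢ + n/(γt))`.
If `mᵢ` is the squared `i`-th coordinate of `μ`, the expected risk of a filter `f` is
`(1/n)(Σ (fᵢ - 1)² mᵢ + σ² Σ fᵢ² + nσ²)` (squared bias, variance, irreducible noise), and
the Bayes risk is at most the bias of `ψ` plus `σ²`. With `x = γλᵢ/n ∈ [0, 1]`, the
inequalities `(1 - x)ᵗ ≤ 1/(1 + tx)` and `1 - (1 - x)ᵗ ≤ min(1, tx) ≤ 2tx/(1 + tx)` give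
`ψᵢ ≤ φᵢ ≤ 2ψᵢ`: gradient descent has smaller bias and at most four times the variance of
ridge regression, and the variance of ridge regression is bounded by its excess risk.
-/

open MeasureTheory ProbabilityTheory Matrix

/-- In the fixed design setting, the expected risk of a deterministic prediction
vector `u ∈ ℝⁿ` : `E(u) = 𝔼_ε (1/n)‖u - (μ + ε)‖²`. -/
noncomputable def detRisk {Ω : Type*} [MeasurableSpace Ω] (P : Measure Ω) {n : ℕ}
    (μ : Fin n → ℝ) (ε : Ω → Fin n → ℝ) (u : Fin n → ℝ) : ℝ :=
  ∫ ω, (1 / (n : ℝ)) * ∑ i, (u i - (μ i + ε ω i)) ^ 2 ∂P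

/-- The infimum of the expected risk over prediction vectors in the range of the
kernel matrix `K_n` (the RKHS in the fixed design). -/
noncomputable def bayesRisk {Ω : Type*} [MeasurableSpace Ω] (P : Measure Ω) {n : ℕ}
    (Kn : Matrix (Fin n) (Fin n) ℝ) (μ : Fin n → ℝ) (ε : Ω → Fin n → ℝ) : ℝ :=
  ⨅ a : Fin n → ℝ, detRisk P μ ε (Kn.mulVec a)

/-- The expected risk of a random (data-dependent) prediction vector `v : Ω → ℝⁿ`. -/
noncomputable def expRisk {Ω : Type*} [MeasurableSpace Ω] (P : Measure Ω) {n : ℕ}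
    (μ : Fin n → ℝ) (ε : Ω → Fin n → ℝ) (v : Ω → Fin n → ℝ) : ℝ :=
  ∫ ω, detRisk P μ ε (v ω) ∂P

/-- The operator (spectral) norm of a real square matrix, i.e. the norm of the
associated operator on Euclidean space. -/
noncomputable def opNorm {n : ℕ} (A : Matrix (Fin n) (Fin n) ℝ) : ℝ :=
  ‖Matrix.toEuclideanCLM (𝕜 := ℝ) A‖

section Filters

noncomputable def gdFilter (η : ℝ) (t : ℕ) (l : ℝ) : ℝ := 1 - (1 - η * l) ^ t

noncomputable def ridgeFilter (c l : ℝ) : ℝ := l / (l + c)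

lemma one_sub_pow_le_one_div_one_add_mul {x : ℝ} (hx0 : 0 ≤ x) (hx1 : x ≤ 1) (t : ℕ) :
    (1 - x) ^ t ≤ 1 / (1 + t * x) := by
  have hsq : (1 - x) ^ t * (1 + x) ^ t ≤ 1 := by
    rw [← mul_pow]; exact pow_le_one₀ (by nlinarith) (by nlinarith)
  have hbern : 1 + t * x ≤ (1 + x) ^ t := one_add_mul_le_pow (by linarith) t
  rw [le_div_iff₀ (by positivity)]
  calc (1 - x) ^ t * (1 + t * x) ≤ (1 - x) ^ t * (1 + x) ^ t := by gcongr
    _ ≤ 1 := hsq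

lemma one_sub_one_sub_pow_le {x : ℝ} (hx0 : 0 ≤ x) (hx1 : x ≤ 1) (t : ℕ) :
    1 - (1 - x) ^ t ≤ 2 * (t * x / (1 + t * x)) := by
  have hq : 0 ≤ (t : ℝ) * x := by positivity
  have hbern : 1 - t * x ≤ (1 - x) ^ t := by
    simpa [mul_neg, ← sub_eq_add_neg] using one_add_mul_le_pow (a := -x) (by linarith) t
  have hpos : 0 ≤ (1 - x) ^ t := pow_nonneg (by linarith) t
  rw [mul_div_assoc', le_div_iff₀ (by positivity)]
  rcases le_total ((t : ℝ) * x) 1 with h | h <;> nlinarith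

variable {η l : ℝ} {t : ℕ}

lemma ridgeFilter_one_div_eq (hη : 0 < η) (hl : 0 ≤ l) (ht : 0 < t) :
    ridgeFilter (1 / (η * t)) l = t * (η * l) / (1 + t * (η * l)) := by
  unfold ridgeFilter
  field_simp
  ring

lemma ridgeFilter_nonneg {c : ℝ} (hc : 0 ≤ c) (hl : 0 ≤ l) : 0 ≤ ridgeFilter c l := by
  unfold ridgeFilter; positivity

lemma gdFilter_le_one (hηl : η * l ≤ 1) : gdFilter η t l ≤ 1 := by
  unfold gdFilter
  linarith [pow_nonneg (by linarith : 0 ≤ 1 - η * l) t]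

lemma ridgeFilter_le_gdFilter (hη : 0 < η) (hl : 0 ≤ l) (hηl : η * l ≤ 1) (ht : 0 < t) :
    ridgeFilter (1 / (η * t)) l ≤ gdFilter η t l := by
  have h := one_sub_pow_le_one_div_one_add_mul (by positivity) hηl t
  have hq : (t : ℝ) * (η * l) / (1 + t * (η * l)) = 1 - 1 / (1 + t * (η * l)) := by
    field_simp; ring
  rw [ridgeFilter_one_div_eq hη hl ht, gdFilter, hq]
  linarith

lemma gdFilter_le_two_mul_ridgeFilter (hη : 0 < η) (hl : 0 ≤ l) (hηl : η * l ≤ 1) (ht : 0 < t) :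
    gdFilter η t l ≤ 2 * ridgeFilter (1 / (η * t)) l := by
  rw [ridgeFilter_one_div_eq hη hl ht]
  exact one_sub_one_sub_pow_le (by positivity) hηl t

end Filters

-- The excess risk of `ψ` is at least its variance term, because `B` is at most its bias plus `κ`.
lemma sub_le_mul_sub_of_filter_bounds {ι : Type*} [Fintype ι] {w κ B C σ : ℝ}
    {m φ ψ : ι → ℝ} (hw : 0 ≤ w) (hm : ∀ i, 0 ≤ m i) (hC : 4 ≤ C)
    (hψ : ∀ i, 0 ≤ ψ i) (hψφ : ∀ i, ψ i ≤ φ i) (hφ1 : ∀ i, φ i ≤ 1) (hφψ : ∀ i, φ i ≤ 2 * ψ i)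
    (hB : B ≤ w * (∑ i, (ψ i - 1) ^ 2 * m i + κ)) :
    w * (∑ i, (φ i - 1) ^ 2 * m i + σ ^ 2 * ∑ i, φ i ^ 2 + κ) - B
      ≤ C * (w * (∑ i, (ψ i - 1) ^ 2 * m i + σ ^ 2 * ∑ i, ψ i ^ 2 + κ) - B) := by
  have hbias : ∑ i, (φ i - 1) ^ 2 * m i ≤ ∑ i, (ψ i - 1) ^ 2 * m i :=
    Finset.sum_le_sum fun i _ => by
      have h2 : 0 ≤ 2 - ψ i - φ i := by linarith [hψφ i, hφ1 i]
      exact mul_le_mul_of_nonneg_right (by nlinarith [mul_nonneg (sub_nonneg.2 (hψφ i)) h2]) (hm i)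
  have hvar : ∑ i, φ i ^ 2 ≤ 4 * ∑ i, ψ i ^ 2 := by
    rw [Finset.mul_sum]
    exact Finset.sum_le_sum fun i _ => by nlinarith [hψ i, hψφ i, hφψ i]
  have hV : 0 ≤ w * (σ ^ 2 * ∑ i, ψ i ^ 2) := by positivity
  nlinarith [mul_le_mul_of_nonneg_left hbias hw,
    mul_le_mul_of_nonneg_left (mul_le_mul_of_nonneg_left hvar (sq_nonneg σ)) hw]

lemma four_le_and_le_sixteen {t : ℕ} (ht : 2 ≤ t) :
    4 ≤ 4 * (1 + 1 / ((t : ℝ) - 1)) ^ 2 ∧ 4 * (1 + 1 / ((t : ℝ) - 1)) ^ 2 ≤ 16 := by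
  have ht' : (1 : ℝ) ≤ (t : ℝ) - 1 := by
    have : (2 : ℝ) ≤ t := by exact_mod_cast ht
    linarith
  have h0 : 0 ≤ 1 / ((t : ℝ) - 1) := by positivity
  have h1 : 1 / ((t : ℝ) - 1) ≤ 1 := by rwa [div_le_one (by linarith)]
  constructor <;> nlinarith

lemma mulVec_gradientDescent_eq {ι R : Type*} [Fintype ι] [DecidableEq ι] [CommRing R]
    (K : Matrix ι ι R) (η : R) (y : ι → R) (α : ℕ → ι → R) (h0 : α 0 = 0)
    (hstep : ∀ s, α (s + 1) = α s - η • (K *ᵥ α s - y)) (s : ℕ) :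
    K *ᵥ α s = (1 - (1 - η • K) ^ s) *ᵥ y := by
  induction s with
  | zero => simp [h0]
  | succ s ih =>
    have hM : (1 - (1 - η • K) ^ s) - η • (K * (1 - (1 - η • K) ^ s) - K)
        = 1 - (1 - η • K) ^ (s + 1) := by
      rw [smul_sub, ← smul_mul_assoc, pow_succ']
      generalize η • K = L
      noncomm_ring
    rw [hstep, mulVec_sub, mulVec_smul, mulVec_sub, ih, mulVec_mulVec, ← hM]
    simp only [sub_mulVec, smul_mulVec, one_mulVec]

section ConjDiagonal

variable {ι : Type*} [Fintype ι] [DecidableEq ι] (U : unitary (Matrix ι ι ℝ))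

noncomputable def conjDiagonal : (ι → ℝ) →ₐ[ℝ] Matrix ι ι ℝ :=
  (Unitary.conjStarAlgAut ℝ _ U).toAlgEquiv.toAlgHom.comp (diagonalAlgHom ℝ)

lemma conjDiagonal_apply (a : ι → ℝ) :
    conjDiagonal U a = U * diagonal a * (U : Matrix ι ι ℝ)ᵀ := by
  simp [conjDiagonal, star_eq_conjTranspose]

lemma transpose_mul_self_of_unitary : (U : Matrix ι ι ℝ)ᵀ * U = 1 := by
  simpa [star_eq_conjTranspose] using Unitary.star_mul_self_of_mem U.2

lemma sum_sq_unitary_mulVec (w : ι → ℝ) :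
    ∑ i, ((U : Matrix ι ι ℝ) *ᵥ w) i ^ 2 = ∑ i, w i ^ 2 := by
  simp only [sq, ← dotProduct.eq_1]
  rw [dotProduct_mulVec, vecMul_mulVec, transpose_mul_self_of_unitary, vecMul_one]

lemma sum_sq_conjDiagonal_mulVec (a v : ι → ℝ) :
    ∑ i, (conjDiagonal U a *ᵥ v) i ^ 2 = ∑ i, a i ^ 2 * ((U : Matrix ι ι ℝ)ᵀ *ᵥ v) i ^ 2 := by
  rw [conjDiagonal_apply, ← mulVec_mulVec, ← mulVec_mulVec, sum_sq_unitary_mulVec]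
  simp [mulVec_diagonal, mul_pow]

lemma sum_sq_conjDiagonal_mulVec_sub_self (a v : ι → ℝ) :
    ∑ i, ((conjDiagonal U a *ᵥ v) i - v i) ^ 2
      = ∑ i, (a i - 1) ^ 2 * ((U : Matrix ι ι ℝ)ᵀ *ᵥ v) i ^ 2 := by
  have h : ∀ i, (conjDiagonal U a *ᵥ v) i - v i = (conjDiagonal U (a - 1) *ᵥ v) i := fun i => by
    rw [map_sub, map_one, sub_mulVec, one_mulVec]; rfl
  simp_rw [h, sum_sq_conjDiagonal_mulVec]; rfl

lemma transpose_conjDiagonal (a : ι → ℝ) : (conjDiagonal U a)ᵀ = conjDiagonal U a := by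
  simp [conjDiagonal_apply, transpose_mul, mul_assoc]

lemma sum_sq_conjDiagonal_apply (a : ι → ℝ) :
    ∑ i, ∑ j, conjDiagonal U a i j ^ 2 = ∑ i, a i ^ 2 := by
  have h : ∑ i, ∑ j, conjDiagonal U a i j ^ 2
      = trace (conjDiagonal U a * (conjDiagonal U a)ᵀ) := by
    simp [trace, mul_apply, sq]
  rw [h, transpose_conjDiagonal, ← map_mul, conjDiagonal_apply, trace_mul_cycle,
    transpose_mul_self_of_unitary, one_mul, trace_diagonal]
  simp [sq]

lemma conjDiagonal_inv {a : ι → ℝ} (ha : ∀ i, a i ≠ 0) :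
    (conjDiagonal U a)⁻¹ = conjDiagonal U a⁻¹ := by
  refine inv_eq_right_inv ?_
  rw [← map_mul, ← map_one (conjDiagonal U)]
  congr 1
  funext i
  simp [ha i]

lemma one_sub_one_sub_smul_conjDiagonal_pow (η : ℝ) (a : ι → ℝ) (t : ℕ) :
    1 - (1 - η • conjDiagonal U a) ^ t = conjDiagonal U (fun i => gdFilter η t (a i)) := by
  rw [← map_smul, ← map_one (conjDiagonal U), ← map_sub, ← map_pow, ← map_sub]
  rfl

lemma conjDiagonal_mul_inv_add_smul_one {a : ι → ℝ} {c : ℝ} (h : ∀ i, a i + c ≠ 0) :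
    conjDiagonal U a * (conjDiagonal U a + c • 1)⁻¹
      = conjDiagonal U (fun i => ridgeFilter c (a i)) := by
  rw [← map_one (conjDiagonal U), ← map_smul, ← map_add,
    conjDiagonal_inv U (a := a + c • 1) (by simpa using h), ← map_mul]
  congr 1
  funext i
  simp [ridgeFilter, div_eq_mul_inv]

end ConjDiagonal

lemma Matrix.IsHermitian.eq_conjDiagonal {ι : Type*} [Fintype ι] [DecidableEq ι]
    {A : Matrix ι ι ℝ} (hA : A.IsHermitian) :
    A = conjDiagonal hA.eigenvectorUnitary hA.eigenvalues := by
  conv_lhs => rw [hA.spectral_theorem]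
  simp [conjDiagonal]

lemma Matrix.IsHermitian.eigenvalues_le_opNorm {n : ℕ} {A : Matrix (Fin n) (Fin n) ℝ}
    (hA : A.IsHermitian) (i : Fin n) : hA.eigenvalues i ≤ opNorm A := by
  have hmem : hA.eigenvalues i ∈ spectrum ℝ (toEuclideanCLM (𝕜 := ℝ) A) := by
    rw [AlgEquiv.spectrum_eq]
    exact hA.eigenvalues_mem_spectrum_real i
  calc hA.eigenvalues i ≤ ‖hA.eigenvalues i‖ := Real.le_norm_self _
    _ ≤ opNorm A * ‖(1 : EuclideanSpace ℝ (Fin n) →L[ℝ] EuclideanSpace ℝ (Fin n))‖ :=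
      spectrum.norm_le_norm_mul_of_mem hmem
    _ ≤ opNorm A := mul_le_of_le_one_right (norm_nonneg _) ContinuousLinearMap.norm_id_le

lemma Matrix.PosSemidef.div_mul_eigenvalues_le_one {n : ℕ} {A : Matrix (Fin n) (Fin n) ℝ}
    (hA : A.PosSemidef) {γ N : ℝ} (hγ0 : 0 < γ) (hγ : γ < 1 / opNorm A) (hN : 1 ≤ N)
    (i : Fin n) : γ / N * hA.1.eigenvalues i ≤ 1 := by
  have hγA : γ * opNorm A < 1 := (lt_div_iff₀ (one_div_pos.mp (hγ0.trans hγ))).mp hγ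
  calc γ / N * hA.1.eigenvalues i ≤ γ * hA.1.eigenvalues i := by
        gcongr; exacts [hA.eigenvalues_nonneg i, div_le_self hγ0.le hN]
    _ ≤ γ * opNorm A := by gcongr; exact hA.1.eigenvalues_le_opNorm i
    _ ≤ 1 := hγA.le

section Noise

variable {Ω : Type*} [MeasurableSpace Ω] {P : Measure Ω} {ι : Type*} {ε : Ω → ι → ℝ} {σ : ℝ}

lemma integral_const_add_sq [IsProbabilityMeasure P] {X : Ω → ℝ} (hX : MemLp X 2 P)
    (hX0 : ∫ ω, X ω ∂P = 0) (b : ℝ) :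
    ∫ ω, (b + X ω) ^ 2 ∂P = b ^ 2 + Var[X; P] := by
  have hmean : ∫ ω, (b + X ω) ∂P = b := by
    rw [integral_add (integrable_const b) (hX.integrable one_le_two), hX0]; simp
  have h := variance_eq_sub (X := fun ω => b + X ω) ((memLp_const b).add hX)
  simp only [Pi.pow_apply] at h
  rw [variance_const_add hX.aestronglyMeasurable, hmean] at h
  linarith

lemma variance_noise (hL2 : ∀ i, MemLp (fun ω => ε ω i) 2 P)
    (hmean : ∀ i, ∫ ω, ε ω i ∂P = 0) (hvar : ∀ i, ∫ ω, (ε ω i) ^ 2 ∂P = σ ^ 2) (i : ι) :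
    Var[fun ω => ε ω i; P] = σ ^ 2 := by
  rw [variance_of_integral_eq_zero (hL2 i).aemeasurable (hmean i), hvar i]

variable [Fintype ι]

lemma memLp_sum_mul_noise [IsFiniteMeasure P] (hL2 : ∀ i, MemLp (fun ω => ε ω i) 2 P) (a : ι → ℝ) :
    MemLp (fun ω => ∑ j, a j * ε ω j) 2 P :=
  memLp_finsetSum _ fun j _ => (hL2 j).const_mul (a j)

lemma integral_sum_mul_noise [IsFiniteMeasure P] (hL2 : ∀ i, MemLp (fun ω => ε ω i) 2 P)
    (hmean : ∀ i, ∫ ω, ε ω i ∂P = 0) (a : ι → ℝ) :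
    ∫ ω, ∑ j, a j * ε ω j ∂P = 0 := by
  rw [integral_finsetSum _ fun j _ => ((hL2 j).integrable one_le_two).const_mul (a j)]
  simp [integral_const_mul, hmean]

lemma variance_sum_mul_noise [IsFiniteMeasure P] (hindep : iIndepFun (fun i ω => ε ω i) P)
    (hL2 : ∀ i, MemLp (fun ω => ε ω i) 2 P)
    (hmean : ∀ i, ∫ ω, ε ω i ∂P = 0) (hvar : ∀ i, ∫ ω, (ε ω i) ^ 2 ∂P = σ ^ 2) (a : ι → ℝ) :
    Var[fun ω => ∑ j, a j * ε ω j; P] = σ ^ 2 * ∑ j, a j ^ 2 := by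
  have hsum : (fun ω => ∑ j, a j * ε ω j) = ∑ j, fun ω => a j * ε ω j := by
    funext ω; simp
  rw [hsum, IndepFun.variance_sum (fun j _ => (hL2 j).const_mul (a j)), Finset.mul_sum]
  · refine Finset.sum_congr rfl fun j _ => ?_
    rw [variance_const_mul, variance_noise hL2 hmean hvar]
    ring
  · intro j _ k _ hjk
    exact (hindep.indepFun hjk).comp (measurable_const_mul (a j)) (measurable_const_mul (a k))

end Noise

section Risk

variable {Ω : Type*} [MeasurableSpace Ω] {P : Measure Ω}
  {n : ℕ} {μ : Fin n → ℝ} {ε : Ω → Fin n → ℝ} {σ : ℝ}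

lemma detRisk_eq [IsProbabilityMeasure P] (hL2 : ∀ i, MemLp (fun ω => ε ω i) 2 P)
    (hmean : ∀ i, ∫ ω, ε ω i ∂P = 0) (hvar : ∀ i, ∫ ω, (ε ω i) ^ 2 ∂P = σ ^ 2) (u : Fin n → ℝ) :
    detRisk P μ ε u = (1 / n) * (∑ i, (u i - μ i) ^ 2 + n * σ ^ 2) := by
  have hL2neg : ∀ i, MemLp (fun ω => -ε ω i) 2 P := fun i => (hL2 i).neg
  have hsplit : ∀ i ω, (u i - (μ i + ε ω i)) ^ 2 = (u i - μ i + -ε ω i) ^ 2 := fun i ω => by ring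
  have hint : ∀ i, Integrable (fun ω => (u i - μ i + -ε ω i) ^ 2) P :=
    fun i => ((memLp_const (u i - μ i)).add (hL2neg i)).integrable_sq
  have hi : ∀ i, ∫ ω, (u i - μ i + -ε ω i) ^ 2 ∂P = (u i - μ i) ^ 2 + σ ^ 2 := fun i => by
    rw [integral_const_add_sq (hL2neg i) (by rw [integral_neg, hmean i, neg_zero]),
      variance_fun_neg, variance_noise hL2 hmean hvar]
  simp_rw [detRisk, hsplit]
  rw [integral_const_mul, integral_finsetSum _ fun i _ => hint i]
  simp [hi, Finset.sum_add_distrib]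

lemma expRisk_mulVec_eq [IsProbabilityMeasure P] (hindep : iIndepFun (fun i ω => ε ω i) P)
    (hL2 : ∀ i, MemLp (fun ω => ε ω i) 2 P)
    (hmean : ∀ i, ∫ ω, ε ω i ∂P = 0) (hvar : ∀ i, ∫ ω, (ε ω i) ^ 2 ∂P = σ ^ 2)
    (A : Matrix (Fin n) (Fin n) ℝ) :
    expRisk P μ ε (fun ω => A *ᵥ fun i => μ i + ε ω i)
      = (1 / n) * (∑ i, ((A *ᵥ μ) i - μ i) ^ 2 + σ ^ 2 * ∑ i, ∑ j, A i j ^ 2 + n * σ ^ 2) := by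
  have hsplit : ∀ ω i, (A *ᵥ fun i => μ i + ε ω i) i - μ i
      = ((A *ᵥ μ) i - μ i) + ∑ j, A i j * ε ω j := fun ω i => by
    simp only [mulVec, dotProduct, mul_add, Finset.sum_add_distrib]; ring
  have hint : ∀ i, Integrable (fun ω => (((A *ᵥ μ) i - μ i) + ∑ j, A i j * ε ω j) ^ 2) P :=
    fun i => ((memLp_const ((A *ᵥ μ) i - μ i)).add (memLp_sum_mul_noise hL2 (A i))).integrable_sq
  have hi : ∀ i, ∫ ω, (((A *ᵥ μ) i - μ i) + ∑ j, A i j * ε ω j) ^ 2 ∂P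
      = ((A *ᵥ μ) i - μ i) ^ 2 + σ ^ 2 * ∑ j, A i j ^ 2 := fun i => by
    rw [integral_const_add_sq (memLp_sum_mul_noise hL2 (A i))
      (integral_sum_mul_noise hL2 hmean (A i)), variance_sum_mul_noise hindep hL2 hmean hvar]
  unfold expRisk
  simp only [detRisk_eq hL2 hmean hvar, hsplit]
  rw [integral_const_mul, integral_add (integrable_finsetSum _ fun i _ => hint i)
    (integrable_const _), integral_finsetSum _ fun i _ => hint i]
  simp [hi, Finset.sum_add_distrib, Finset.mul_sum, add_assoc]

lemma bayesRisk_le_detRisk (K : Matrix (Fin n) (Fin n) ℝ) (a : Fin n → ℝ) :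
    bayesRisk P K μ ε ≤ detRisk P μ ε (K *ᵥ a) :=
  ciInf_le ⟨0, by rintro _ ⟨b, rfl⟩; exact integral_nonneg fun ω => by positivity⟩ a

end Risk

section SpectralRisk

variable {Ω : Type*} [MeasurableSpace Ω] {P : Measure Ω} [IsProbabilityMeasure P]
  {n : ℕ} {μ : Fin n → ℝ} {ε : Ω → Fin n → ℝ} {σ : ℝ} (U : unitary (Matrix (Fin n) (Fin n) ℝ))

lemma expRisk_conjDiagonal_mulVec_eq (hindep : iIndepFun (fun i ω => ε ω i) P)
    (hL2 : ∀ i, MemLp (fun ω => ε ω i) 2 P)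
    (hmean : ∀ i, ∫ ω, ε ω i ∂P = 0) (hvar : ∀ i, ∫ ω, (ε ω i) ^ 2 ∂P = σ ^ 2)
    (f : Fin n → ℝ) :
    expRisk P μ ε (fun ω => conjDiagonal U f *ᵥ fun i => μ i + ε ω i)
      = (1 / n) * (∑ i, (f i - 1) ^ 2 * ((U : Matrix (Fin n) (Fin n) ℝ)ᵀ *ᵥ μ) i ^ 2
          + σ ^ 2 * ∑ i, f i ^ 2 + n * σ ^ 2) := by
  rw [expRisk_mulVec_eq hindep hL2 hmean hvar, sum_sq_conjDiagonal_mulVec_sub_self,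
    sum_sq_conjDiagonal_apply]

lemma bayesRisk_le_of_mul_eq_conjDiagonal (hL2 : ∀ i, MemLp (fun ω => ε ω i) 2 P)
    (hmean : ∀ i, ∫ ω, ε ω i ∂P = 0) (hvar : ∀ i, ∫ ω, (ε ω i) ^ 2 ∂P = σ ^ 2)
    {K B : Matrix (Fin n) (Fin n) ℝ} {f : Fin n → ℝ} (hKB : K * B = conjDiagonal U f) :
    bayesRisk P K μ ε
      ≤ (1 / n) * (∑ i, (f i - 1) ^ 2 * ((U : Matrix (Fin n) (Fin n) ℝ)ᵀ *ᵥ μ) i ^ 2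
          + n * σ ^ 2) := by
  have h := bayesRisk_le_detRisk (P := P) (μ := μ) (ε := ε) K (B *ᵥ μ)
  rwa [detRisk_eq hL2 hmean hvar, mulVec_mulVec, hKB, sum_sq_conjDiagonal_mulVec_sub_self] at h

end SpectralRisk

theorem stmt4_general {Ω : Type*} [MeasurableSpace Ω] (P : Measure Ω) [IsProbabilityMeasure P]
    (n : ℕ) (hn : 0 < n)
    (Kn : Matrix (Fin n) (Fin n) ℝ) (hKpsd : Kn.PosSemidef)
    (μ : Fin n → ℝ) (σ : ℝ)
    (ε : Ω → Fin n → ℝ)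
    (hindep : iIndepFun (fun i ω => ε ω i) P)
    (hL2 : ∀ i, MemLp (fun ω => ε ω i) 2 P)
    (hmean : ∀ i, ∫ ω, ε ω i ∂P = 0)
    (hvar : ∀ i, ∫ ω, (ε ω i) ^ 2 ∂P = σ ^ 2)
    (γ : ℝ) (hγ0 : 0 < γ) (hγ : γ < 1 / opNorm Kn)
    (t : ℕ) (ht : 2 ≤ t)
    (α : ℕ → Ω → Fin n → ℝ) (hα0 : ∀ ω, α 0 ω = 0)
    (hαrec : ∀ s ω, α (s + 1) ω
      = α s ω - (γ / n) • (Kn.mulVec (α s ω) - fun i => μ i + ε ω i)) :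
    expRisk P μ ε (fun ω => Kn.mulVec (α t ω)) - bayesRisk P Kn μ ε
      ≤ (4 * (1 + 1 / ((t : ℝ) - 1)) ^ 2) *
        (expRisk P μ ε
          (fun ω => Kn.mulVec
            ((Kn + ((1 / (γ * t)) * n) • (1 : Matrix (Fin n) (Fin n) ℝ))⁻¹.mulVec
              fun i => μ i + ε ω i))
          - bayesRisk P Kn μ ε)
    ∧ 4 * (1 + 1 / ((t : ℝ) - 1)) ^ 2 ≤ 16 := by
  have hH : Kn.IsHermitian := hKpsd.1
  set U := hH.eigenvectorUnitary
  set d := hH.eigenvalues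
  have hd : ∀ i, 0 ≤ d i := hKpsd.eigenvalues_nonneg
  have hn' : (0 : ℝ) < n := Nat.cast_pos.mpr hn
  have ht0 : 0 < t := by omega
  have hstep : ∀ i, γ / n * d i ≤ 1 :=
    hKpsd.div_mul_eigenvalues_le_one hγ0 hγ (Nat.one_le_cast.mpr hn)
  have hGD : ∀ ω, Kn *ᵥ α t ω
      = conjDiagonal U (fun i => gdFilter (γ / n) t (d i)) *ᵥ fun i => μ i + ε ω i := fun ω => by
    rw [mulVec_gradientDescent_eq Kn _ _ (α · ω) (hα0 ω) (hαrec · ω), hH.eq_conjDiagonal,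
      one_sub_one_sub_smul_conjDiagonal_pow]
  have hKRLS : Kn * (Kn + (1 / (γ * t) * n) • 1)⁻¹
      = conjDiagonal U (fun i => ridgeFilter (1 / (γ / n * t)) (d i)) := by
    have hc : 1 / (γ * t) * (n : ℝ) = 1 / (γ / n * t) := by field_simp
    rw [hH.eq_conjDiagonal, conjDiagonal_mul_inv_add_smul_one, hc]
    exact fun i => (add_pos_of_nonneg_of_pos (hd i) (by positivity)).ne'
  simp only [hGD, mulVec_mulVec, hKRLS]
  rw [expRisk_conjDiagonal_mulVec_eq U hindep hL2 hmean hvar,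
    expRisk_conjDiagonal_mulVec_eq U hindep hL2 hmean hvar]
  have hη : 0 < γ / n := by positivity
  exact ⟨sub_le_mul_sub_of_filter_bounds (by positivity) (fun i => sq_nonneg _)
    (four_le_and_le_sixteen ht).1 (fun i => ridgeFilter_nonneg (by positivity) (hd i))
    (fun i => ridgeFilter_le_gdFilter hη (hd i) (hstep i) ht0)
    (fun i => gdFilter_le_one (hstep i))
    (fun i => gdFilter_le_two_mul_ridgeFilter hη (hd i) (hstep i) ht0)
    (bayesRisk_le_of_mul_eq_conjDiagonal U hL2 hmean hvar hKRLS),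
    (four_le_and_le_sixteen ht).2⟩

/-- In the fixed-design kernel regression setting, the early
stopping (gradient descent) iterates `ᾰ₀ = 0`,
`ᾰ_s = ᾰ_{s-1} - (γ/n)(K_n ᾰ_{s-1} - y)`, with predictions `v̆_t = K_n ᾰ_t`,
satisfy, for `0 < γ < 1/‖K_n‖_op` and `t ≥ 2`,
`E[R(v̆_t)] ≤ c_t E[R(v̄_{1/(γt)})]` with `c_t = 4(1 + 1/(t-1))² ≤ 16`,
where `v̄_λ = K_n (K_n + λ n I)⁻¹ y` is the KRLS prediction. -/
theorem stmt4 {Ω : Type*} [MeasurableSpace Ω] (P : Measure Ω) [IsProbabilityMeasure P]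
    (n : ℕ) (hn : 0 < n)
    (Kn : Matrix (Fin n) (Fin n) ℝ) (hKpsd : Kn.PosSemidef)
    (μ : Fin n → ℝ) (σ : ℝ) (hσ : 0 < σ)
    (ε : Ω → Fin n → ℝ)
    (hmeas : ∀ i, Measurable fun ω => ε ω i)
    (hindep : iIndepFun (fun i ω => ε ω i) P)
    (hident : ∀ i j, IdentDistrib (fun ω => ε ω i) (fun ω => ε ω j) P P)
    (hL2 : ∀ i, MemLp (fun ω => ε ω i) 2 P)
    (hmean : ∀ i, ∫ ω, ε ω i ∂P = 0)
    (hvar : ∀ i, ∫ ω, (ε ω i) ^ 2 ∂P = σ ^ 2)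
    (γ : ℝ) (hγ0 : 0 < γ) (hγ : γ < 1 / opNorm Kn)
    (t : ℕ) (ht : 2 ≤ t)
    (α : ℕ → Ω → Fin n → ℝ) (hα0 : ∀ ω, α 0 ω = 0)
    (hαrec : ∀ s ω, α (s + 1) ω
      = α s ω - (γ / n) • (Kn.mulVec (α s ω) - fun i => μ i + ε ω i)) :
    expRisk P μ ε (fun ω => Kn.mulVec (α t ω)) - bayesRisk P Kn μ ε
      ≤ (4 * (1 + 1 / ((t : ℝ) - 1)) ^ 2) *
        (expRisk P μ ε
          (fun ω => Kn.mulVec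
            ((Kn + ((1 / (γ * t)) * n) • (1 : Matrix (Fin n) (Fin n) ℝ))⁻¹.mulVec
              fun i => μ i + ε ω i))
          - bayesRisk P Kn μ ε)
    ∧ 4 * (1 + 1 / ((t : ℝ) - 1)) ^ 2 ≤ 16 :=
  stmt4_general P n hn Kn hKpsd μ σ ε hindep hL2 hmean hvar γ hγ0 hγ t ht α hα0 hαrec
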